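/- arXiv:2507.23041 — 5 statements merged into one kernel-verified Lean document; each statement's English description precedes it below -/
import Mathlib

section
/- If n is a covering number, then σ(n) > 2n; i.e., every covering number is abundant. -/
open scoped Classical

/-- The congruence class of `a` mod `m` inside `range n` is the image of
`range (n/m)` under `t ↦ (a % m).toNat + m * t`. -/
lemma filter_cong_eq_image (n m : ℕ) (hm : 0 < m) (hmn : m ∣ n) (a : ℤ) :
    (Finset.range n).filter (fun x : ℕ => (x : ℤ) ≡ a [ZMOD (m : ℤ)]) =
      (Finset.range (n / m)).image (fun t => (a % (m : ℤ)).toNat + m * t) := by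
  have hm' : (0 : ℤ) < (m : ℤ) := by exact_mod_cast hm
  have hr0 : (0 : ℤ) ≤ a % (m : ℤ) := Int.emod_nonneg a (ne_of_gt hm')
  have hrm : a % (m : ℤ) < (m : ℤ) := Int.emod_lt_of_pos a hm'
  have hrcast : ((a % (m : ℤ)).toNat : ℤ) = a % (m : ℤ) := Int.toNat_of_nonneg hr0
  have hrltm : (a % (m : ℤ)).toNat < m := by
    have := hrm; omega
  ext x
  simp only [Finset.mem_filter, Finset.mem_image, Finset.mem_range]
  constructor
  · rintro ⟨hx, hc⟩
    have hc' : (x : ℤ) % (m : ℤ) = a % (m : ℤ) := hc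
    have hxm : ((x % m : ℕ) : ℤ) = a % (m : ℤ) := by
      push_cast
      rw [← hc']
    have hxr : x % m = (a % (m : ℤ)).toNat := by omega
    refine ⟨x / m, Nat.div_lt_div_of_lt_of_dvd hmn hx, ?_⟩
    rw [← hxr, Nat.mod_add_div]
  · rintro ⟨t, ht, rfl⟩
    constructor
    · have : (a % (m : ℤ)).toNat + m * t < m * (t + 1) := by
        nlinarith [hrltm]
      calc (a % (m : ℤ)).toNat + m * t < m * (t + 1) := this
        _ ≤ m * (n / m) := Nat.mul_le_mul_left m ht
        _ = n := Nat.mul_div_cancel' hmn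
    · show (((a % (m : ℤ)).toNat + m * t : ℕ) : ℤ) % m = a % m
      push_cast [hrcast]
      rw [Int.add_mul_emod_self_left, Int.emod_emod_of_dvd _ dvd_rfl]

lemma card_cong (n m : ℕ) (hm : 0 < m) (hmn : m ∣ n) (a : ℤ) :
    ((Finset.range n).filter (fun x : ℕ => (x : ℤ) ≡ a [ZMOD (m : ℤ)])).card = n / m := by
  rw [filter_cong_eq_image n m hm hmn a, Finset.card_image_of_injective, Finset.card_range]
  intro s t h
  simp only at h
  have h2 : m * s = m * t := by omega
  exact Nat.eq_of_mul_eq_mul_left hm h2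

/-- No exact cover: if the classes cover everything with total density exactly matching,
some residue is covered twice. -/
lemma exists_double (n : ℕ) (D : Finset ℕ) (a : ℕ → ℤ) (hD : D ⊆ n.divisors)
    (hgt : ∀ m ∈ D, 1 < m) (hcov : ∀ x : ℤ, ∃ m ∈ D, x ≡ a m [ZMOD (m : ℤ)]) :
    ∃ x ∈ Finset.range n,
      2 ≤ (D.filter (fun m : ℕ => (x : ℤ) ≡ a m [ZMOD (m : ℤ)])).card := by
  by_contra h
  push_neg at h
  -- every x is covered exactly once
  have hn0 : n ≠ 0 := by
    obtain ⟨m, hm, -⟩ := hcov 0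
    have := Nat.mem_divisors.mp (hD hm)
    exact this.2
  have hone : ∀ x ∈ Finset.range n,
      (D.filter (fun m : ℕ => (x : ℤ) ≡ a m [ZMOD (m : ℤ)])).card = 1 := by
    intro x hx
    have h2 := h x hx
    obtain ⟨m, hm, hmc⟩ := hcov x
    have : m ∈ D.filter (fun m : ℕ => (x : ℤ) ≡ a m [ZMOD (m : ℤ)]) :=
      Finset.mem_filter.mpr ⟨hm, hmc⟩
    have := Finset.card_pos.mpr ⟨m, this⟩
    omega
  -- set up the primitive root of unity of order the largest modulus
  have hDne : D.Nonempty := by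
    obtain ⟨m, hm, -⟩ := hcov 0; exact ⟨m, hm⟩
  set M := D.max' hDne with hM
  have hMD : M ∈ D := D.max'_mem hDne
  have hM1 : 1 < M := hgt M hMD
  have hMn : M ∣ n := (Nat.mem_divisors.mp (hD hMD)).1
  set ζ : ℂ := Complex.exp (2 * Real.pi * Complex.I / M) with hζ
  have hprim : IsPrimitiveRoot ζ M := Complex.isPrimitiveRoot_exp M (by omega)
  have hζpow : ∀ l : ℕ, ζ ^ l = 1 ↔ M ∣ l := fun l => hprim.pow_eq_one_iff_dvd l
  have hζn : ζ ^ n = 1 := (hζpow n).mpr hMn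
  have hζ1 : ζ ≠ 1 := by
    intro h1
    have hdvd := (hζpow 1).mp (by rw [h1, pow_one])
    have := Nat.le_of_dvd one_pos hdvd
    omega
  -- total sum of ζ^x over range n is 0
  have htot : ∑ x ∈ Finset.range n, ζ ^ x = 0 := by
    rw [geom_sum_eq hζ1, hζn, sub_self, zero_div]
  -- rewrite using exactness
  have hswap : ∑ x ∈ Finset.range n, ζ ^ x
      = ∑ m ∈ D, ∑ x ∈ (Finset.range n).filter
          (fun x : ℕ => (x : ℤ) ≡ a m [ZMOD (m : ℤ)]), ζ ^ x := by
    have : ∀ x ∈ Finset.range n, ζ ^ x =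
        ∑ m ∈ D, if (x : ℤ) ≡ a m [ZMOD (m : ℤ)] then ζ ^ x else 0 := by
      intro x hx
      rw [← Finset.sum_filter]
      rw [Finset.sum_const, hone x hx, one_smul]
    rw [Finset.sum_congr rfl this, Finset.sum_comm]
    congr 1
    ext m
    rw [Finset.sum_filter]
  -- for each m, compute the inner sum
  have hinner : ∀ m ∈ D, ∑ x ∈ (Finset.range n).filter
      (fun x : ℕ => (x : ℤ) ≡ a m [ZMOD (m : ℤ)]), ζ ^ x
      = if m = M then (n / M : ℕ) * ζ ^ ((a M % (M : ℤ)).toNat) else 0 := by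
    intro m hm
    have hm1 : 1 < m := hgt m hm
    have hmn : m ∣ n := (Nat.mem_divisors.mp (hD hm)).1
    rw [filter_cong_eq_image n m (by omega) hmn (a m),
      Finset.sum_image (by
        intro s hs t ht h
        have h2 : m * s = m * t := by simp only at h; omega
        exact Nat.eq_of_mul_eq_mul_left (by omega) h2)]
    have : ∀ t ∈ Finset.range (n / m),
        ζ ^ ((a m % (m : ℤ)).toNat + m * t) = ζ ^ ((a m % (m : ℤ)).toNat) * (ζ ^ m) ^ t := by
      intro t ht
      rw [pow_add, pow_mul]
    rw [Finset.sum_congr rfl this, ← Finset.mul_sum]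
    by_cases hmM : m = M
    · have h1 : ζ ^ m = 1 := by rw [hmM]; exact (hζpow M).mpr dvd_rfl
      rw [if_pos hmM, h1, hmM]
      simp [mul_comm]
    · have hMm : ¬ M ∣ m := by
        intro hdvd
        have hle : m ≤ M := D.le_max' m hm
        have := Nat.le_of_dvd (by omega) hdvd
        omega
      have hζm : ζ ^ m ≠ 1 := fun h => hMm ((hζpow m).mp h)
      have hpow : (ζ ^ m) ^ (n / m) = 1 := by
        rw [← pow_mul, Nat.mul_div_cancel' hmn, hζn]
      rw [geom_sum_eq hζm, hpow, sub_self, zero_div, mul_zero, if_neg hmM]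
  rw [hswap, Finset.sum_congr rfl hinner, Finset.sum_ite_eq' D M
    (fun _ => ((n / M : ℕ) : ℂ) * ζ ^ ((a M % (M : ℤ)).toNat)), if_pos hMD] at htot
  have hnM : 0 < n / M := Nat.div_pos (Nat.le_of_dvd (by omega) hMn) (by omega)
  have hζne : ζ ^ ((a M % (M : ℤ)).toNat) ≠ 0 := pow_ne_zero _ (by
    rw [hζ]; exact Complex.exp_ne_zero _)
  have : ((n / M : ℕ) : ℂ) ≠ 0 := Nat.cast_ne_zero.mpr (by omega)
  exact (mul_ne_zero this hζne) htot

def IsCoveringNumber (n : ℕ) : Prop :=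
  ∃ (D : Finset ℕ) (a : ℕ → ℤ), D ⊆ n.divisors ∧ (∀ m ∈ D, 1 < m) ∧
    ∀ x : ℤ, ∃ m ∈ D, x ≡ a m [ZMOD (m : ℤ)]

/-- Every covering number is abundant: `σ(n) > 2n`. -/
theorem stmt2 (n : ℕ) (hn : IsCoveringNumber n) : 2 * n < ∑ d ∈ n.divisors, d := by
  obtain ⟨D, a, hD, hgt, hcov⟩ := hn
  have hn0 : n ≠ 0 := by
    obtain ⟨m, hm, -⟩ := hcov 0
    exact (Nat.mem_divisors.mp (hD hm)).2
  -- density strictly exceeds 1 :  n < ∑_{m ∈ D} n / m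
  have hdouble := exists_double n D a hD hgt hcov
  have hswap : ∑ x ∈ Finset.range n,
      (D.filter (fun m : ℕ => (x : ℤ) ≡ a m [ZMOD (m : ℤ)])).card
      = ∑ m ∈ D, n / m := by
    have h1 : ∀ x ∈ Finset.range n,
        (D.filter (fun m : ℕ => (x : ℤ) ≡ a m [ZMOD (m : ℤ)])).card
        = ∑ m ∈ D, if (x : ℤ) ≡ a m [ZMOD (m : ℤ)] then 1 else 0 := by
      intro x hx
      rw [Finset.card_filter]
    rw [Finset.sum_congr rfl h1, Finset.sum_comm]
    refine Finset.sum_congr rfl (fun m hm => ?_)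
    have hm1 := hgt m hm
    have hmn := (Nat.mem_divisors.mp (hD hm)).1
    rw [← Finset.sum_filter] at *
    have := card_cong n m (by omega) hmn (a m)
    rw [← this, Finset.card_eq_sum_ones]
  have hdens : n < ∑ m ∈ D, n / m := by
    rw [← hswap]
    obtain ⟨x0, hx0, hx02⟩ := hdouble
    calc n = ∑ _x ∈ Finset.range n, 1 := by simp
      _ < _ := by
        refine Finset.sum_lt_sum (fun x hx => ?_) ⟨x0, hx0, by omega⟩
        obtain ⟨m, hm, hmc⟩ := hcov x
        exact Finset.card_pos.mpr ⟨m, Finset.mem_filter.mpr ⟨hm, hmc⟩⟩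
  -- σ(n) = ∑_{d ∣ n} n/d ≥ n/1 + ∑_{m ∈ D} n/m
  have hσ : ∑ d ∈ n.divisors, d = ∑ d ∈ n.divisors, n / d := by
    simpa using (Nat.sum_div_divisors n id).symm
  rw [hσ]
  have h1mem : 1 ∈ n.divisors := Nat.one_mem_divisors.mpr hn0
  have hsub : D ⊆ n.divisors.erase 1 := by
    intro m hm
    exact Finset.mem_erase.mpr ⟨by have := hgt m hm; omega, hD hm⟩
  have : ∑ d ∈ n.divisors, n / d = n / 1 + ∑ d ∈ n.divisors.erase 1, n / d :=
    (Finset.add_sum_erase _ _ h1mem).symm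
  rw [this, Nat.div_one]
  have hle : ∑ m ∈ D, n / m ≤ ∑ d ∈ n.divisors.erase 1, n / d :=
    Finset.sum_le_sum_of_subset hsub
  omega
end

section
/- If n is a primitive covering number with largest prime factor p = P+(n), then p ≤ τ(n/p), where τ counts the number of divisors. -/
open scoped Classical

def IsPrimitiveCoveringNumber (n : ℕ) : Prop :=
  IsCoveringNumber n ∧ ∀ d, d ∣ n → d < n → ¬ IsCoveringNumber d

/-- If `n` is a primitive covering number with largest prime factor `p`, then
`p ≤ τ(n/p)`. -/
theorem stmt5 (n p : ℕ) (hn : IsPrimitiveCoveringNumber n) (hp : p.Prime) (hpn : p ∣ n)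
    (hmax : ∀ q, q.Prime → q ∣ n → q ≤ p) : p ≤ (n / p).divisors.card := by
  obtain ⟨⟨D, a, hD, hD1, hcov⟩, hprim⟩ := hn
  have hn0 : n ≠ 0 := by
    obtain ⟨m, hmD, -⟩ := hcov 0
    exact (Nat.mem_divisors.mp (hD hmD)).2
  set v := n.factorization p with hv
  have hv1 : 1 ≤ v := hp.factorization_pos_of_dvd hn0 hpn
  set c := n / p ^ v with hc
  have hpc : ¬ p ∣ c := Nat.not_dvd_ordCompl hp hn0
  have hnc : n = p ^ v * c := (Nat.ordProj_mul_ordCompl_eq_self n p).symm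
  have hc0 : c ≠ 0 := (Nat.ordCompl_pos p hn0).ne'
  have hnp : n / p = p ^ (v - 1) * c := by
    conv_lhs => rw [hnc, show v = (v-1)+1 from (Nat.succ_pred_eq_of_pos hv1).symm]
    rw [pow_succ, show p ^ (v-1) * p * c = p * (p ^ (v-1) * c) by ring,
      Nat.mul_div_cancel_left _ hp.pos]
  have hnp0 : n / p ≠ 0 := by
    rw [hnp]
    exact Nat.mul_ne_zero (pow_ne_zero _ hp.pos.ne') hc0
  have hncov : ¬ IsCoveringNumber (n / p) :=
    hprim _ (Nat.div_dvd_of_dvd hpn) (Nat.div_lt_self (Nat.pos_of_ne_zero hn0) hp.one_lt)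
  have hkey : ¬ ∀ x : ℤ, ∃ m ∈ D.filter (fun m => m ∣ n / p), x ≡ a m [ZMOD (m : ℤ)] := by
    intro h
    refine hncov ⟨D.filter (fun m => m ∣ n / p), a, ?_, ?_, h⟩
    · intro m hm
      obtain ⟨hmD, hmd⟩ := Finset.mem_filter.mp hm
      exact Nat.mem_divisors.mpr ⟨hmd, hnp0⟩
    · intro m hm
      exact hD1 m (Finset.mem_filter.mp hm).1
  push_neg at hkey
  obtain ⟨x₀, hx₀⟩ := hkey
  have hsel : ∀ t : ℕ, ∃ m, m ∈ D ∧ p ^ v ∣ m ∧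
      (x₀ + ((n / p : ℕ) : ℤ) * t ≡ a m [ZMOD (m : ℤ)]) := by
    intro t
    obtain ⟨m, hmD, hm⟩ := hcov (x₀ + ((n / p : ℕ) : ℤ) * t)
    have hmn : m ∣ n := (Nat.mem_divisors.mp (hD hmD)).1
    have hm0 : m ≠ 0 := by have := hD1 m hmD; omega
    refine ⟨m, hmD, ?_, hm⟩
    have hmnd : ¬ m ∣ n / p := by
      intro hdvd
      apply hx₀ m (Finset.mem_filter.mpr ⟨hmD, hdvd⟩)
      have hdd : (m : ℤ) ∣ ((n / p : ℕ) : ℤ) * t :=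
        Dvd.dvd.mul_right (Int.natCast_dvd_natCast.mpr hdvd) _
      exact (Int.modEq_iff_dvd.mpr (by simpa using hdd)).trans hm
    by_contra hnd
    apply hmnd
    have hlt : m.factorization p < v := by
      rcases Nat.lt_or_ge (m.factorization p) v with h | h
      · exact h
      · exact absurd ((Nat.Prime.pow_dvd_iff_le_factorization hp hm0).mpr h) hnd
    rw [Nat.dvd_div_iff_mul_dvd hpn]
    refine (Nat.factorization_le_iff_dvd (mul_ne_zero hp.pos.ne' hm0) hn0).mp ?_
    have hmle := (Nat.factorization_le_iff_dvd hm0 hn0).mpr hmn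
    rw [Nat.factorization_mul hp.pos.ne' hm0]
    intro q
    simp only [Finsupp.coe_add, Pi.add_apply]
    rcases eq_or_ne q p with rfl | hq
    · rw [hp.factorization_self]
      omega
    · rw [hp.factorization, Finsupp.single_apply, if_neg (fun h => hq h.symm)]
      simpa using hmle q
  choose f hf using hsel
  have hinj : ∀ t t' : ℕ, t < p → t' < p → f t = f t' → t = t' := by
    intro t t' ht ht' he
    by_contra hne
    have h1 := (hf t).2.2
    have h2 := (hf t').2.2
    rw [he] at h1
    have hd : ((f t' : ℕ) : ℤ) ∣ ((n / p : ℕ) : ℤ) * ((t' : ℤ) - t) := by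
      have := (h1.trans h2.symm).dvd
      rw [show x₀ + ((n / p : ℕ) : ℤ) * t' - (x₀ + ((n / p : ℕ) : ℤ) * t)
        = ((n / p : ℕ) : ℤ) * ((t' : ℤ) - t) by ring] at this
      exact this
    have hpv : ((p : ℤ)) ^ v ∣ ((n / p : ℕ) : ℤ) * ((t' : ℤ) - t) := by
      refine dvd_trans ?_ hd
      exact_mod_cast Int.natCast_dvd_natCast.mpr (hf t').2.1
    rw [hnp] at hpv
    push_cast at hpv
    rw [show (p : ℤ) ^ v = (p : ℤ) ^ (v - 1) * p by
        rw [← pow_succ, show v - 1 + 1 = v from by omega]] at hpv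
    rw [show (p : ℤ) ^ (v - 1) * c * ((t' : ℤ) - t)
      = (p : ℤ) ^ (v - 1) * ((c : ℤ) * ((t' : ℤ) - t)) by ring] at hpv
    have hpd : (p : ℤ) ∣ (c : ℤ) * ((t' : ℤ) - t) :=
      (mul_dvd_mul_iff_left (pow_ne_zero (v - 1) (by exact_mod_cast hp.pos.ne'))).mp hpv
    rcases (Nat.prime_iff_prime_int.mp hp).dvd_mul.mp hpd with h | h
    · exact hpc (Int.natCast_dvd_natCast.mp h)
    · have habs : |(t' : ℤ) - t| < p := by
        rw [abs_sub_lt_iff]; constructor <;> omega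
      have := Int.eq_zero_of_abs_lt_dvd h habs
      omega
  have hmem : ∀ t ∈ Finset.range p, f t / p ∈ (n / p).divisors := by
    intro t ht
    have hpf : p ∣ f t := dvd_trans (dvd_pow_self p (by omega)) (hf t).2.1
    have hfn : f t ∣ n := (Nat.mem_divisors.mp (hD (hf t).1)).1
    refine Nat.mem_divisors.mpr ⟨?_, hnp0⟩
    obtain ⟨k, hk⟩ := hpf
    obtain ⟨l, hl⟩ := hpn
    have hkl : k ∣ l := (mul_dvd_mul_iff_left hp.pos.ne').mp (by rw [← hk, ← hl]; exact hfn)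
    rw [hk, hl, Nat.mul_div_cancel_left _ hp.pos, Nat.mul_div_cancel_left _ hp.pos]
    exact hkl
  have hinj' : Set.InjOn (fun t => f t / p) (Finset.range p) := by
    intro t ht t' ht' he
    simp only at he
    simp only [Finset.coe_range, Set.mem_Iio] at ht ht'
    have hpf : p ∣ f t := dvd_trans (dvd_pow_self p (by omega)) (hf t).2.1
    have hpf' : p ∣ f t' := dvd_trans (dvd_pow_self p (by omega)) (hf t').2.1
    have : f t = f t' := by
      rw [← Nat.div_mul_cancel hpf, ← Nat.div_mul_cancel hpf', he]
    exact hinj t t' ht ht' this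
  have := Finset.card_le_card_of_injOn (fun t => f t / p) hmem hinj'
  simpa using this
end

section
/- If n is an almost-covering number (i.e., r(n) = n−1) and p is a prime with P+(n) < p ≤ τ(n), then pn is a covering number. -/
open scoped Classical

noncomputable def coveredCount (n : ℕ) (D : Finset ℕ) (a : ℕ → ℤ) : ℕ :=
  ((Finset.range n).filter (fun x => ∃ m ∈ D, (x : ℤ) ≡ a m [ZMOD (m : ℤ)])).card

noncomputable def maxCovered (n : ℕ) : ℕ :=
  sSup {k | ∃ (D : Finset ℕ) (a : ℕ → ℤ),
    D ⊆ n.divisors ∧ (∀ m ∈ D, 1 < m) ∧ k = coveredCount n D a}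

theorem coveredCount_eq (n : ℕ) (D : Finset ℕ) (a : ℕ → ℤ) :
    coveredCount n D a =
      ((Finset.range n).filter
        (fun x : ℕ => ∃ m ∈ D, ((x : ℕ) : ℤ) ≡ a m [ZMOD (m : ℤ)])).card := by
  unfold coveredCount
  rw [show (do let a ← Finset.range n; pure ((a : ℤ)) : Finset ℤ)
        = (Finset.range n).image (fun x : ℕ => (x : ℤ)) from by
      ext x; simp [Bind.bind, Pure.pure]]
  rw [Finset.filter_image]
  exact Finset.card_image_of_injective _ (fun _ _ h => by exact_mod_cast h)

/-- If `n` is an almost-covering number (`r(n) = n - 1`) and `p` is a prime with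
`P⁺(n) < p ≤ τ(n)`, then `p n` is a covering number. -/
theorem stmt6 (n p : ℕ) (hn : 0 < n) (hac : maxCovered n = n - 1) (hp : p.Prime)
    (hbig : ∀ q, q.Prime → q ∣ n → q < p) (hle : p ≤ n.divisors.card) :
    IsCoveringNumber (p * n) := by
  classical
  have hp0 : 0 < p := hp.pos
  have hpn0 : p * n ≠ 0 := Nat.mul_ne_zero hp0.ne' hn.ne'
  have hpdvd : ¬ p ∣ n := fun h => lt_irrefl p (hbig p hp h)
  -- extract an almost-covering of n
  unfold maxCovered at hac
  have hne : Set.Nonempty {k | ∃ (D : Finset ℕ) (a : ℕ → ℤ),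
      D ⊆ n.divisors ∧ (∀ m ∈ D, 1 < m) ∧ k = coveredCount n D a} :=
    ⟨coveredCount n ∅ (fun _ => 0), ∅, fun _ => 0, by simp, by simp, rfl⟩
  have hbdd : BddAbove {k | ∃ (D : Finset ℕ) (a : ℕ → ℤ),
      D ⊆ n.divisors ∧ (∀ m ∈ D, 1 < m) ∧ k = coveredCount n D a} := by
    refine ⟨n, ?_⟩
    rintro k ⟨D, a, -, -, rfl⟩
    rw [coveredCount_eq]
    exact le_trans (Finset.card_filter_le _ _) (le_of_eq (Finset.card_range n))
  have hmem := Nat.sSup_mem hne hbdd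
  rw [hac] at hmem
  obtain ⟨D, a, hDsub, hD1, hcount⟩ := hmem
  rw [coveredCount_eq] at hcount
  -- the uncovered residue
  set C : Finset ℕ := (Finset.range n).filter
    (fun x => ∃ m ∈ D, (x : ℤ) ≡ a m [ZMOD (m : ℤ)]) with hC
  have hCcard : C.card = n - 1 := hcount.symm
  have hCsub : C ⊆ Finset.range n := Finset.filter_subset _ _
  have hU : ((Finset.range n) \ C).card = 1 := by
    rw [Finset.card_sdiff_of_subset hCsub, Finset.card_range, hCcard]
    omega
  obtain ⟨x₀, hx₀⟩ := Finset.card_eq_one.mp hU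
  have hx₀mem : x₀ ∈ Finset.range n \ C := hx₀ ▸ Finset.mem_singleton_self x₀
  have hx₀lt : x₀ < n := Finset.mem_range.mp (Finset.mem_sdiff.mp hx₀mem).1
  have hcov : ∀ y, y < n → y ≠ x₀ → ∃ m ∈ D, (y : ℤ) ≡ a m [ZMOD (m : ℤ)] := by
    intro y hy hyne
    by_contra h
    have : y ∈ Finset.range n \ C := by
      rw [Finset.mem_sdiff, hC, Finset.mem_filter]
      exact ⟨Finset.mem_range.mpr hy, fun hmem => h hmem.2⟩
    rw [hx₀] at this
    exact hyne (Finset.mem_singleton.mp this)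
  -- the extra congruences
  let f : Fin p → ℕ := fun k => n.divisors.orderEmbOfCardLe hle k
  have hfmem : ∀ k, f k ∈ n.divisors := fun k => Finset.orderEmbOfCardLe_mem _ hle k
  have hfdvd : ∀ k, f k ∣ n := fun k => (Nat.mem_divisors.mp (hfmem k)).1
  have hfpos : ∀ k, 0 < f k := fun k =>
    Nat.pos_of_dvd_of_pos (hfdvd k) hn
  let g : Fin p → ℕ := fun k => p * f k
  have hginj : Function.Injective g := by
    intro i j hij
    have : f i = f j := Nat.eq_of_mul_eq_mul_left hp0 hij
    exact (n.divisors.orderEmbOfCardLe hle).injective this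
  haveI : Nonempty (Fin p) := ⟨⟨0, hp0⟩⟩
  have hinv : ∀ k, Function.invFun g (g k) = k := Function.leftInverse_invFun hginj
  have hgnotD : ∀ k, g k ∉ D := by
    intro k hk
    have hdvd : g k ∣ n := (Nat.mem_divisors.mp (hDsub hk)).1
    exact hpdvd (dvd_trans (Dvd.intro (f k) rfl) hdvd)
  refine ⟨D ∪ Finset.univ.image g,
    fun m => if m ∈ D then a m else (x₀ : ℤ) + (((Function.invFun g m : Fin p) : ℕ) : ℤ) * (n : ℤ),
    ?_, ?_, ?_⟩
  · intro m hm
    rcases Finset.mem_union.mp hm with h | h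
    · have := Nat.mem_divisors.mp (hDsub h)
      exact Nat.mem_divisors.mpr ⟨this.1.trans (dvd_mul_left _ p), hpn0⟩
    · obtain ⟨k, -, rfl⟩ := Finset.mem_image.mp h
      exact Nat.mem_divisors.mpr ⟨Nat.mul_dvd_mul_left p (hfdvd k), hpn0⟩
  · intro m hm
    rcases Finset.mem_union.mp hm with h | h
    · exact hD1 m h
    · obtain ⟨k, -, rfl⟩ := Finset.mem_image.mp h
      calc 1 < p := hp.one_lt
        _ ≤ p * f k := Nat.le_mul_of_pos_right p (hfpos k)
  · intro x
    by_cases hxx : x ≡ (x₀ : ℤ) [ZMOD (n : ℤ)]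
    · -- uncovered class: use the new congruences
      obtain ⟨t, ht⟩ : (n : ℤ) ∣ x - (x₀ : ℤ) := (Int.ModEq.dvd hxx.symm)
      set k : ℕ := (t % (p : ℤ)).toNat with hkdef
      have hkz : (k : ℤ) = t % (p : ℤ) :=
        Int.toNat_of_nonneg (Int.emod_nonneg t (by exact_mod_cast hp0.ne'))
      have hklt : k < p := by
        have := Int.emod_lt_of_pos t (show (0:ℤ) < p by exact_mod_cast hp0)
        omega
      have hkp : (p : ℤ) ∣ t - (k : ℤ) := by
        rw [hkz]
        exact Int.dvd_self_sub_of_emod_eq rfl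
      have key : x ≡ (x₀ : ℤ) + (k : ℤ) * (n : ℤ) [ZMOD ((p * n : ℕ) : ℤ)] := by
        obtain ⟨s, hs⟩ := hkp
        refine Int.modEq_iff_dvd.mpr ⟨-s, ?_⟩
        push_cast
        linear_combination (-1 : ℤ) * ht + (-(n : ℤ)) * hs
      set K : Fin p := ⟨k, hklt⟩
      refine ⟨g K, Finset.mem_union_right _ (Finset.mem_image.mpr ⟨K, Finset.mem_univ _, rfl⟩), ?_⟩
      simp only [if_neg (hgnotD K), hinv K]
      have hdvd : ((g K : ℕ) : ℤ) ∣ ((p * n : ℕ) : ℤ) := by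
        exact_mod_cast Nat.mul_dvd_mul_left p (hfdvd K)
      exact (key.of_dvd hdvd)
    · -- covered class: use the old congruences
      set y : ℕ := (x % (n : ℤ)).toNat with hydef
      have hn0 : ((n:ℕ) : ℤ) ≠ 0 := by exact_mod_cast hn.ne'
      have hyz : (y : ℤ) = x % (n : ℤ) := Int.toNat_of_nonneg (Int.emod_nonneg x hn0)
      have hylt : y < n := by
        have := Int.emod_lt_of_pos x (show (0:ℤ) < n by exact_mod_cast hn)
        omega
      have hyx : (y : ℤ) ≡ x [ZMOD (n : ℤ)] := by
        rw [hyz]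
        exact Int.emod_emod_of_dvd x dvd_rfl
      have hyne : y ≠ x₀ := by
        intro h
        exact hxx (by rw [← h]; exact hyx.symm)
      obtain ⟨m, hm, hmod⟩ := hcov y hylt hyne
      refine ⟨m, Finset.mem_union_left _ hm, ?_⟩
      simp only [if_pos hm]
      have hmdvd : ((m : ℕ) : ℤ) ∣ ((n : ℕ) : ℤ) := by
        exact_mod_cast (Nat.mem_divisors.mp (hDsub hm)).1
      exact ((hyx.of_dvd hmdvd).symm.trans hmod)
end

section
/- For every odd prime p, the integer n = 2^{p−1} · p is a covering number. -/
open scoped Classical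

/-- For every odd prime `p`, the integer `2^(p-1) * p` is a covering number. -/
theorem stmt9 (p : ℕ) (hp : p.Prime) (hodd : p ≠ 2) :
    IsCoveringNumber (2 ^ (p - 1) * p) := by
  have hp3 : 3 ≤ p := by have := hp.two_le; omega
  have hmod : (p + 1) % 2 = 0 := by
    rcases Nat.even_or_odd p with h | h
    · exact absurd ((Nat.Prime.even_iff hp).mp h) hodd
    · obtain ⟨k, hk⟩ := h; omega
  have hhalf : 2 * ((p + 1) / 2) = p + 1 := Nat.mul_div_cancel' (Nat.dvd_of_mod_eq_zero hmod)
  set b : ℤ := (((p + 1) / 2 : ℕ) : ℤ) with hb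
  have hb2 : 2 * b = (p : ℤ) + 1 := by
    rw [hb]; exact_mod_cast congrArg (Nat.cast : ℕ → ℤ) hhalf
  set a : ℕ → ℤ := fun m =>
    if p ∣ m then
      ((2 ^ Nat.log 2 (m / p) : ℕ) : ℤ) * (Nat.log 2 (m / p)) * b ^ (Nat.log 2 (m / p))
    else ((m / 2 : ℕ) : ℤ) with ha
  refine ⟨((Finset.range (p - 1)).image (fun i => 2 ^ (i + 1))) ∪
      ((Finset.range p).image (fun j => 2 ^ j * p)), a, ?_, ?_, ?_⟩
  · intro m hm
    rw [Nat.mem_divisors]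
    constructor
    · simp only [Finset.mem_union, Finset.mem_image, Finset.mem_range] at hm
      rcases hm with ⟨i, hi, rfl⟩ | ⟨j, hj, rfl⟩
      · exact Dvd.dvd.mul_right (pow_dvd_pow 2 (by omega)) p
      · exact Nat.mul_dvd_mul (pow_dvd_pow 2 (by omega)) dvd_rfl
    · positivity
  · intro m hm
    simp only [Finset.mem_union, Finset.mem_image, Finset.mem_range] at hm
    rcases hm with ⟨i, hi, rfl⟩ | ⟨j, hj, rfl⟩
    · exact Nat.one_lt_two_pow (by omega)
    · calc 1 < p := by omega
        _ ≤ 2 ^ j * p := Nat.le_mul_of_pos_left p (by positivity)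
  · intro x
    by_cases hx : (2 : ℤ) ^ (p - 1) ∣ x
    · -- use modulus 2^j * p where j = x % p
      set j : ℕ := (x % p).toNat with hj
      have hp0 : (0 : ℤ) < p := by exact_mod_cast hp.pos
      have hjx : (j : ℤ) = x % p := Int.toNat_of_nonneg (Int.emod_nonneg x (by positivity))
      have hjp : j < p := by
        have := Int.emod_lt_of_pos x hp0
        omega
      refine ⟨2 ^ j * p, ?_, ?_⟩
      · exact Finset.mem_union_right _ (Finset.mem_image.mpr ⟨j, Finset.mem_range.mpr hjp, rfl⟩)
      · have hpd : p ∣ 2 ^ j * p := dvd_mul_left p (2 ^ j)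
        have hlog : Nat.log 2 ((2 ^ j * p) / p) = j := by
          rw [Nat.mul_div_cancel _ hp.pos, Nat.log_pow one_lt_two]
        have haval : a (2 ^ j * p) = ((2:ℤ) ^ j) * j * b ^ j := by
          simp [ha, hpd, hlog]
        have hcop : ((2:ℤ) ^ j).natAbs.Coprime ((p : ℤ)).natAbs := by
          simp only [Int.natAbs_natCast, Int.natAbs_pow]
          exact Nat.Coprime.pow_left _ ((Nat.coprime_primes Nat.prime_two hp).mpr
            (fun h => hodd h.symm)).symm.symm
        have key : x ≡ a (2 ^ j * p) [ZMOD ((2:ℤ) ^ j * p)] := by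
          rw [haval]
          refine (Int.modEq_and_modEq_iff_modEq_mul hcop).mp ⟨?_, ?_⟩
          · -- both ≡ 0 mod 2^j
            have h1 : (2:ℤ) ^ j ∣ x := dvd_trans (pow_dvd_pow 2 (by omega)) hx
            have h2 : (2:ℤ) ^ j ∣ (2:ℤ) ^ j * j * b ^ j := Dvd.dvd.mul_right (dvd_mul_right _ _) _
            exact (Int.modEq_zero_iff_dvd.mpr h1).trans (Int.modEq_zero_iff_dvd.mpr h2).symm
          · -- mod p : x ≡ j, and RHS ≡ j since 2b ≡ 1
            have hxj : x ≡ (j : ℤ) [ZMOD (p : ℤ)] := by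
              show x % (p : ℤ) = (j : ℤ) % (p : ℤ)
              rw [hjx]
              exact (Int.emod_emod_of_dvd x dvd_rfl).symm
            have h2b : (2 * b : ℤ) ≡ 1 [ZMOD (p : ℤ)] := by
              rw [hb2]
              have : ((p : ℤ) + 1) ≡ 0 + 1 [ZMOD (p : ℤ)] :=
                Int.ModEq.add_right 1 (Int.modEq_zero_iff_dvd.mpr dvd_rfl)
              simpa using this
            have hrhs : ((2:ℤ) ^ j) * j * b ^ j ≡ (j : ℤ) [ZMOD (p : ℤ)] := by
              calc ((2:ℤ) ^ j) * j * b ^ j = (2 * b) ^ j * j := by ring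
                _ ≡ 1 ^ j * j [ZMOD (p : ℤ)] := (h2b.pow j).mul_right _
                _ = (j : ℤ) := by ring
            exact hxj.trans hrhs.symm
        simp only [Nat.cast_mul, Nat.cast_pow, Nat.cast_ofNat] at key ⊢; exact key
    · -- use modulus 2^(i+1)
      have hex : ∃ i, ¬ ((2:ℤ) ^ (i + 1) ∣ x) := ⟨p - 2, by
        have : p - 2 + 1 = p - 1 := by omega
        rw [this]; exact hx⟩
      set i := Nat.find hex with hi
      have hnd : ¬ ((2:ℤ) ^ (i + 1) ∣ x) := Nat.find_spec hex
      have hid : (2:ℤ) ^ i ∣ x := by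
        rcases Nat.eq_zero_or_pos i with h | h
        · simp [h]
        · have := Nat.find_min hex (m := i - 1) (by omega)
          push_neg at this
          have hi1 : i - 1 + 1 = i := by omega
          rwa [hi1] at this
      have hile : i ≤ p - 2 := Nat.find_min' hex (by
        have : p - 2 + 1 = p - 1 := by omega
        rw [this]; exact hx)
      refine ⟨2 ^ (i + 1), ?_, ?_⟩
      · exact Finset.mem_union_left _ (Finset.mem_image.mpr ⟨i, Finset.mem_range.mpr (by omega), rfl⟩)
      · have hnp : ¬ p ∣ 2 ^ (i + 1) := by
          intro h
          have h2 := Nat.Prime.dvd_of_dvd_pow hp h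
          have := Nat.le_of_dvd (by norm_num) h2
          omega
        have haval : a (2 ^ (i + 1)) = ((2:ℤ) ^ i) := by
          rw [ha]
          simp only [if_neg hnp]
          rw [pow_succ, Nat.mul_div_cancel _ two_pos]
          push_cast; ring
        rw [haval]
        obtain ⟨u, hu⟩ := hid
        have hodd_u : ¬ (2 : ℤ) ∣ u := by
          intro ⟨v, hv⟩
          exact hnd ⟨v, by rw [hu, hv]; ring⟩
        have : x - 2 ^ i = 2 ^ i * (u - 1) := by rw [hu]; ring
        have h2 : (2:ℤ) ∣ u - 1 := by
          rcases Int.even_or_odd u with h | h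
          · exact absurd h.two_dvd hodd_u
          · obtain ⟨k, hk⟩ := h; exact ⟨k, by omega⟩
        have : ((2:ℤ) ^ (i + 1)) ∣ x - 2 ^ i := by
          rw [this, pow_succ]
          obtain ⟨k, hk⟩ := h2
          exact ⟨k, by rw [hk]; ring⟩
        have hdvd : ((2:ℤ) ^ (i + 1)) ∣ (2:ℤ) ^ i - x := by
          rw [show (2:ℤ) ^ i - x = -(x - 2 ^ i) by ring]
          exact dvd_neg.mpr this
        have hfin : x ≡ (2:ℤ) ^ i [ZMOD (2:ℤ) ^ (i + 1)] := Int.modEq_iff_dvd.mpr hdvd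
        exact_mod_cast hfin
end

section
/- Suppose an even integer n = p₁^{α₁} ⋯ p_k^{α_k} p_{k+1} with 2 = p₁ < ⋯ < p_k < p_{k+1}, k ≥ 1, α_i ≥ 1, satisfies: (1) p_{i+1} = τ(p₁^{α₁} ⋯ p_i^{α_i}) + 1 for 1 ≤ i < k; (2) p_{k+1} ≤ τ(p₁^{α₁} ⋯ p_k^{α_k}); (3) p_{k+1} > τ(n/(p_i p_{k+1})) for each 1 ≤ i ≤ k. Then n is a primitive covering number. -/
open scoped Classical

def AlmostCov (l : ℕ) : Prop :=
  ∃ (D : Finset ℕ) (a : ℕ → ℤ) (r : ℤ), D ⊆ l.divisors ∧ (∀ m ∈ D, 1 < m) ∧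
    ∀ x : ℤ, x ≡ r [ZMOD (l : ℤ)] ∨ ∃ m ∈ D, x ≡ a m [ZMOD (m : ℤ)]

lemma almostCov_one : AlmostCov 1 :=
  ⟨∅, fun _ => 0, 0, by simp, by simp, fun x => Or.inl (Int.modEq_one)⟩

lemma almostCov_step {l pp : ℕ} (hl : 0 < l) (hpp : 0 < pp) (h : AlmostCov l)
    (hcard : l.divisors.card + (pp - 1) ≤ (l * pp).divisors.card) :
    AlmostCov (l * pp) := by
  classical
  obtain ⟨D, a, r, hD, hD1, hcov⟩ := h
  have hlp : l * pp ≠ 0 := by positivity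
  have hsub : l.divisors ⊆ (l * pp).divisors :=
    Nat.divisors_subset_of_dvd hlp ⟨pp, rfl⟩
  set S := (l * pp).divisors \ l.divisors with hS
  have hScard : pp - 1 ≤ S.card := by
    rw [hS, Finset.card_sdiff_of_subset hsub]; omega
  obtain ⟨T, hTS, hTcard⟩ := Finset.exists_subset_card_eq hScard
  set e := T.orderIsoOfFin hTcard with he
  set a' : ℕ → ℤ := fun m =>
    if hm : m ∈ T then r + ((e.symm ⟨m, hm⟩ : Fin (pp - 1)) : ℤ) * l else a m with ha'
  refine ⟨D ∪ T, a', r + ((pp - 1 : ℕ) : ℤ) * l, ?_, ?_, ?_⟩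
  · intro m hm
    rcases Finset.mem_union.1 hm with hm | hm
    · exact hsub (hD hm)
    · exact (Finset.mem_sdiff.1 (hTS hm)).1
  · intro m hm
    rcases Finset.mem_union.1 hm with hm | hm
    · exact hD1 m hm
    · have h1 := Finset.mem_sdiff.1 (hTS hm)
      have hd : m ∣ l * pp := (Nat.mem_divisors.1 h1.1).1
      have hm0 : m ≠ 0 := by
        rintro rfl; exact hlp (Nat.eq_zero_of_zero_dvd hd)
      have hm1 : m ≠ 1 := by
        rintro rfl
        exact h1.2 (Nat.one_mem_divisors.2 hl.ne')
      omega
  · intro x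
    have hTD : ∀ m ∈ T, m ∉ l.divisors := fun m hm => (Finset.mem_sdiff.1 (hTS hm)).2
    rcases hcov x with hx | ⟨m, hm, hxm⟩
    · -- x ≡ r [ZMOD l]
      obtain ⟨y, hy⟩ := (hx.symm).dvd
      set j := y % (pp : ℤ) with hj
      have hpp' : (0 : ℤ) < pp := by exact_mod_cast hpp
      have hj0 : 0 ≤ j := Int.emod_nonneg y hpp'.ne'
      have hjlt : j < pp := Int.emod_lt_of_pos y hpp'
      have hdvd : ∀ c : ℤ, c = j → ((l : ℤ) * pp) ∣ (r + c * l) - x := by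
        rintro c rfl
        have : (pp : ℤ) ∣ y - j := (Int.mod_modEq y (pp : ℤ)).dvd
        obtain ⟨t, ht⟩ := this
        refine ⟨-t, ?_⟩
        have hyx : x = r + l * y := by omega
        rw [hyx]; linear_combination (-(l:ℤ)) * ht
      by_cases hcase : j = ((pp - 1 : ℕ) : ℤ)
      · left
        have h' := hdvd _ hcase.symm
        have : ((l * pp : ℕ) : ℤ) ∣ (r + ((pp - 1 : ℕ) : ℤ) * l) - x := by
          push_cast; push_cast at h'; exact h'
        exact Int.modEq_of_dvd this
      · right
        have hjlt' : j.toNat < pp - 1 := by omega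
        set J : Fin (pp - 1) := ⟨j.toNat, hjlt'⟩ with hJ
        refine ⟨(e J : ℕ), Finset.mem_union_right _ (e J).2, ?_⟩
        have hmem : ((e J : ℕ)) ∈ T := (e J).2
        have ha'm : a' (e J : ℕ) = r + (J : ℤ) * l := by
          rw [ha']
          simp only [hmem, dif_pos]
          congr 2
          have : (⟨(e J : ℕ), hmem⟩ : {x // x ∈ T}) = e J := rfl
          rw [this, OrderIso.symm_apply_apply]
        have hdj : ((e J : ℕ) : ℤ) ∣ ((l * pp : ℕ) : ℤ) := by
          exact_mod_cast Int.natCast_dvd_natCast.2 (Nat.mem_divisors.1 ((Finset.mem_sdiff.1 (hTS hmem)).1)).1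
        have hx2 : x ≡ r + (J : ℤ) * l [ZMOD ((l * pp : ℕ) : ℤ)] := by
          have : ((J : ℕ) : ℤ) = j := by simp [hJ]; omega
          refine (Int.modEq_of_dvd ?_).symm.symm
          have := hdvd ((J : ℕ) : ℤ) this
          push_cast at this ⊢
          convert this using 2
        rw [ha'm]
        exact hx2.of_dvd hdj
    · right
      refine ⟨m, Finset.mem_union_left _ hm, ?_⟩
      have : a' m = a m := by
        rw [ha']
        have : m ∉ T := fun hmT => hTD m hmT (hD hm)
        simp [this]
      rw [this]; exact hxm

lemma cov_step {l pp : ℕ} (hl : 0 < l) (hpp : 0 < pp) (h : AlmostCov l)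
    (hcard : l.divisors.card + pp ≤ (l * pp).divisors.card) :
    IsCoveringNumber (l * pp) := by
  classical
  obtain ⟨D, a, r, hD, hD1, hcov⟩ := h
  have hlp : l * pp ≠ 0 := by positivity
  have hsub : l.divisors ⊆ (l * pp).divisors :=
    Nat.divisors_subset_of_dvd hlp ⟨pp, rfl⟩
  set S := (l * pp).divisors \ l.divisors with hS
  have hScard : pp ≤ S.card := by
    rw [hS, Finset.card_sdiff_of_subset hsub]; omega
  obtain ⟨T, hTS, hTcard⟩ := Finset.exists_subset_card_eq hScard
  set e := T.orderIsoOfFin hTcard with he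
  set a' : ℕ → ℤ := fun m =>
    if hm : m ∈ T then r + ((e.symm ⟨m, hm⟩ : Fin pp) : ℤ) * l else a m with ha'
  refine ⟨D ∪ T, a', ?_, ?_, ?_⟩
  · intro m hm
    rcases Finset.mem_union.1 hm with hm | hm
    · exact hsub (hD hm)
    · exact (Finset.mem_sdiff.1 (hTS hm)).1
  · intro m hm
    rcases Finset.mem_union.1 hm with hm | hm
    · exact hD1 m hm
    · have h1 := Finset.mem_sdiff.1 (hTS hm)
      have hd : m ∣ l * pp := (Nat.mem_divisors.1 h1.1).1
      have hm0 : m ≠ 0 := by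
        rintro rfl; exact hlp (Nat.eq_zero_of_zero_dvd hd)
      have hm1 : m ≠ 1 := by
        rintro rfl
        exact h1.2 (Nat.one_mem_divisors.2 hl.ne')
      omega
  · intro x
    have hTD : ∀ m ∈ T, m ∉ l.divisors := fun m hm => (Finset.mem_sdiff.1 (hTS hm)).2
    rcases hcov x with hx | ⟨m, hm, hxm⟩
    · obtain ⟨y, hy⟩ := (hx.symm).dvd
      set j := y % (pp : ℤ) with hj
      have hpp' : (0 : ℤ) < pp := by exact_mod_cast hpp
      have hj0 : 0 ≤ j := Int.emod_nonneg y hpp'.ne'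
      have hjlt : j < pp := Int.emod_lt_of_pos y hpp'
      have hdvd : ∀ c : ℤ, c = j → ((l : ℤ) * pp) ∣ (r + c * l) - x := by
        rintro c rfl
        have : (pp : ℤ) ∣ y - j := (Int.mod_modEq y (pp : ℤ)).dvd
        obtain ⟨t, ht⟩ := this
        refine ⟨-t, ?_⟩
        have hyx : x = r + l * y := by omega
        rw [hyx]; linear_combination (-(l:ℤ)) * ht
      have hjlt' : j.toNat < pp := by omega
      set J : Fin pp := ⟨j.toNat, hjlt'⟩ with hJ
      refine ⟨(e J : ℕ), Finset.mem_union_right _ (e J).2, ?_⟩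
      have hmem : ((e J : ℕ)) ∈ T := (e J).2
      have ha'm : a' (e J : ℕ) = r + (J : ℤ) * l := by
        rw [ha']
        simp only [hmem, dif_pos]
        congr 2
        have : (⟨(e J : ℕ), hmem⟩ : {x // x ∈ T}) = e J := rfl
        rw [this, OrderIso.symm_apply_apply]
      have hdj : ((e J : ℕ) : ℤ) ∣ ((l * pp : ℕ) : ℤ) := by
        exact_mod_cast Int.natCast_dvd_natCast.2 (Nat.mem_divisors.1 ((Finset.mem_sdiff.1 (hTS hmem)).1)).1
      have hx2 : x ≡ r + (J : ℤ) * l [ZMOD ((l * pp : ℕ) : ℤ)] := by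
        have hJj : ((J : ℕ) : ℤ) = j := by simp [hJ]; omega
        refine Int.modEq_of_dvd ?_
        have := hdvd ((J : ℕ) : ℤ) hJj
        push_cast at this ⊢
        convert this using 2
      rw [ha'm]
      exact hx2.of_dvd hdj
    · refine ⟨m, Finset.mem_union_left _ hm, ?_⟩
      have : a' m = a m := by
        rw [ha']
        have : m ∉ T := fun hmT => hTD m hmT (hD hm)
        simp [this]
      rw [this]; exact hxm

lemma not_cov_one : ¬ IsCoveringNumber 1 := by
  rintro ⟨D, a, hD, hD1, hcov⟩
  obtain ⟨m, hm, -⟩ := hcov 0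
  have h1 := hD hm
  rw [Nat.divisors_one, Finset.mem_singleton] at h1
  subst h1
  exact absurd (hD1 1 hm) (by norm_num)

lemma geomSumLt' {q : ℕ} (hq : 2 ≤ q) : ∀ n : ℕ, ∑ i ∈ Finset.range n, (q - 1) * q ^ i < q ^ n := by
  intro n
  induction n with
  | zero => simp
  | succ n ih =>
    rw [Finset.sum_range_succ, pow_succ]
    have hqn : 0 < q ^ n := pow_pos (by omega) n
    have h4 : q ^ n + (q - 1) * q ^ n = q ^ n * q := by
      obtain ⟨t, rfl⟩ : ∃ t, q = t + 2 := ⟨q - 2, by omega⟩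
      have ht1 : t + 2 - 1 = t + 1 := rfl
      rw [ht1]; ring
    omega

lemma descent {s q γ : ℕ} (hq : q.Prime) (hqs : ¬ q ∣ s) (hs : 0 < s)
    (hτ : s.divisors.card ≤ q - 1) (h : IsCoveringNumber (s * q ^ γ)) :
    IsCoveringNumber s := by
  classical
  obtain ⟨D, a, hD, hD1, hcov⟩ := h
  have hq2 : 2 ≤ q := hq.two_le
  have hn0 : s * q ^ γ ≠ 0 := by positivity
  set v : ℕ → ℕ := fun m => m.factorization q with hv
  have hmdvd : ∀ m ∈ D, m ∣ s * q ^ γ := fun m hm => (Nat.mem_divisors.1 (hD hm)).1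
  have hm0 : ∀ m ∈ D, m ≠ 0 := by
    intro m hm h0
    exact hn0 (Nat.eq_zero_of_zero_dvd (h0 ▸ hmdvd m hm))
  set D1 := D.filter (fun m => q ∣ m) with hD1def
  -- v m ∈ Icc 1 γ for m ∈ D1
  have hvmem : ∀ m ∈ D1, v m ∈ Finset.Icc 1 γ := by
    intro m hm
    obtain ⟨hmD, hqm⟩ := Finset.mem_filter.1 hm
    have h1 : 1 ≤ v m := (Nat.Prime.factorization_pos_of_dvd hq (hm0 m hmD) hqm)
    have h2 : v m ≤ γ := by
      have hle := (Nat.factorization_le_iff_dvd (hm0 m hmD) hn0).2 (hmdvd m hmD) q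
      rwa [Nat.factorization_mul hs.ne' (pow_ne_zero γ hq.pos.ne'),
        hq.factorization_pow, Finsupp.add_apply,
        Nat.factorization_eq_zero_of_not_dvd hqs, Finsupp.single_eq_same, zero_add] at hle
    exact Finset.mem_Icc.2 ⟨h1, h2⟩
  set Bad : ℕ → Finset ℕ := fun m =>
    (Finset.range (q ^ γ)).filter (fun c => (c : ℤ) ≡ a m [ZMOD ((q ^ (v m) : ℕ) : ℤ)]) with hBad
  -- card bound for Bad m
  have hBadcard : ∀ m ∈ D1, (Bad m).card ≤ q ^ (γ - v m) := by
    intro m hm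
    have hvγ : v m ≤ γ := (Finset.mem_Icc.1 (hvmem m hm)).2
    refine le_trans (Finset.card_le_card_of_injOn (fun c => c / q ^ (v m)) ?_ ?_)
      (le_of_eq (Finset.card_range _))
    · intro c hc
      simp only [hBad, Finset.mem_coe, Finset.mem_filter, Finset.mem_range] at hc
      simp only [Finset.mem_coe, Finset.mem_range]
      rw [Nat.div_lt_iff_lt_mul (pow_pos hq.pos _)]
      calc c < q ^ γ := hc.1
        _ = q ^ (γ - v m) * q ^ (v m) := by rw [← pow_add]; congr 1; omega
    · intro c1 hc1 c2 hc2 hdiv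
      simp only [hBad, Finset.mem_coe, Finset.mem_filter] at hc1 hc2
      have hmod : c1 % q ^ (v m) = c2 % q ^ (v m) := by
        have h12 : (c1 : ℤ) ≡ (c2 : ℤ) [ZMOD ((q ^ (v m) : ℕ) : ℤ)] := hc1.2.trans hc2.2.symm
        exact Int.natCast_modEq_iff.1 h12
      have e1 := Nat.div_add_mod c1 (q ^ (v m))
      have e2 := Nat.div_add_mod c2 (q ^ (v m))
      simp only at hdiv
      rw [hdiv] at e1
      omega
  -- fiber counting
  have hfiber : ∀ j ∈ Finset.Icc 1 γ, (D1.filter (fun m => v m = j)).card ≤ q - 1 := by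
    intro j hj
    refine le_trans ?_ hτ
    apply Finset.card_le_card_of_injOn (fun m => m / q ^ j)
    · intro m hm
      obtain ⟨hmD1, hvj⟩ := Finset.mem_filter.1 hm
      have hmD := (Finset.mem_filter.1 hmD1).1
      have hoc : m / q ^ j = ordCompl[q] m := by rw [← hvj]
      simp only [Finset.mem_coe]
      rw [hoc]
      have hdvd2 : ordCompl[q] m ∣ ordCompl[q] (s * q ^ γ) :=
        Nat.ordCompl_dvd_ordCompl_of_dvd (hmdvd m hmD) q
      have hfact : (s * q ^ γ).factorization q = γ := by
        rw [Nat.factorization_mul hs.ne' (pow_ne_zero γ hq.pos.ne'),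
          hq.factorization_pow, Finsupp.add_apply,
          Nat.factorization_eq_zero_of_not_dvd hqs, Finsupp.single_eq_same, zero_add]
      have hordn : ordCompl[q] (s * q ^ γ) = s := by
        rw [hfact, Nat.mul_div_assoc s dvd_rfl, Nat.div_self (pow_pos hq.pos γ), mul_one]
      rw [hordn] at hdvd2
      exact Nat.mem_divisors.2 ⟨hdvd2, hs.ne'⟩
    · intro m1 hm1 m2 hm2 hdiv
      rw [Finset.mem_coe, Finset.mem_filter] at hm1 hm2
      have hd1 : q ^ j ∣ m1 := hm1.2 ▸ Nat.ordProj_dvd m1 q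
      have hd2 : q ^ j ∣ m2 := hm2.2 ▸ Nat.ordProj_dvd m2 q
      simp only at hdiv
      rw [← Nat.div_mul_cancel hd1, ← Nat.div_mul_cancel hd2, hdiv]
  -- total sum bound
  have hsum : ∑ m ∈ D1, q ^ (γ - v m) < q ^ γ := by
    rw [← Finset.sum_fiberwise_of_maps_to hvmem (fun m => q ^ (γ - v m))]
    have hstep : ∀ j ∈ Finset.Icc 1 γ,
        (∑ m ∈ D1.filter (fun m => v m = j), q ^ (γ - v m)) ≤ (q - 1) * q ^ (γ - j) := by
      intro j hj
      have : ∀ m ∈ D1.filter (fun m => v m = j), q ^ (γ - v m) = q ^ (γ - j) := by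
        intro m hm
        rw [(Finset.mem_filter.1 hm).2]
      rw [Finset.sum_congr rfl this, Finset.sum_const, smul_eq_mul]
      exact Nat.mul_le_mul_right _ (hfiber j hj)
    calc ∑ j ∈ Finset.Icc 1 γ, ∑ m ∈ D1.filter (fun m => v m = j), q ^ (γ - v m)
        ≤ ∑ j ∈ Finset.Icc 1 γ, (q - 1) * q ^ (γ - j) := Finset.sum_le_sum hstep
      _ = ∑ i ∈ Finset.range γ, (q - 1) * q ^ (γ - 1 - i) := by
          rw [← Finset.Ico_add_one_right_eq_Icc, Finset.sum_Ico_eq_sum_range]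
          simp only [Nat.succ_sub_one, Nat.add_sub_cancel]
          exact Finset.sum_congr rfl
            (fun i hi => by rw [show γ - (1 + i) = γ - 1 - i by omega])
      _ = ∑ i ∈ Finset.range γ, (q - 1) * q ^ i :=
          Finset.sum_range_reflect (fun t => (q - 1) * q ^ t) γ
      _ < q ^ γ := geomSumLt' hq2 γ
  -- choose good c
  have hexc : ∃ c ∈ Finset.range (q ^ γ), c ∉ D1.biUnion Bad := by
    by_contra hcon
    push_neg at hcon
    have hsub2 : Finset.range (q ^ γ) ⊆ D1.biUnion Bad := hcon
    have hcard2 := Finset.card_le_card hsub2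
    rw [Finset.card_range] at hcard2
    have := Finset.card_biUnion_le (s := D1) (t := Bad)
    have hle := le_trans hcard2 this
    have := Finset.sum_le_sum hBadcard
    omega
  obtain ⟨c, hcrange, hcB⟩ := hexc
  -- CRT element
  have hcop : Nat.Coprime s (q ^ γ) :=
    Nat.Coprime.pow_right γ ((Nat.Prime.coprime_iff_not_dvd hq).2 hqs).symm
  have hcopZ : IsCoprime (s : ℤ) ((q ^ γ : ℕ) : ℤ) := Nat.isCoprime_iff_coprime.2 hcop
  obtain ⟨u, w, huw⟩ := hcopZ
  refine ⟨D.filter (fun m => m ∣ s), a, ?_, ?_, ?_⟩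
  · intro m hm
    exact Nat.mem_divisors.2 ⟨(Finset.mem_filter.1 hm).2, hs.ne'⟩
  · intro m hm
    exact hD1 m (Finset.mem_filter.1 hm).1
  · intro y
    set x : ℤ := y * w * ((q ^ γ : ℕ) : ℤ) + (c : ℤ) * u * s with hx
    have hxy : x ≡ y [ZMOD (s : ℤ)] := by
      rw [Int.modEq_iff_dvd, hx]
      exact ⟨u * (y - (c : ℤ)), by linear_combination (-y) * huw⟩
    have hxc : x ≡ (c : ℤ) [ZMOD ((q ^ γ : ℕ) : ℤ)] := by
      rw [Int.modEq_iff_dvd, hx]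
      exact ⟨w * ((c : ℤ) - y), by linear_combination (-(c : ℤ)) * huw⟩
    obtain ⟨m, hm, hxm⟩ := hcov x
    by_cases hqm : q ∣ m
    · exfalso
      have hmD1 : m ∈ D1 := Finset.mem_filter.2 ⟨hm, hqm⟩
      have hvm := Finset.mem_Icc.1 (hvmem m hmD1)
      have hpde : ((q ^ v m : ℕ) : ℤ) ∣ ((q ^ γ : ℕ) : ℤ) :=
        Int.natCast_dvd_natCast.2 (pow_dvd_pow q hvm.2)
      have hpdm : ((q ^ v m : ℕ) : ℤ) ∣ (m : ℤ) :=
        Int.natCast_dvd_natCast.2 (Nat.ordProj_dvd m q)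
      have hca : (c : ℤ) ≡ a m [ZMOD ((q ^ v m : ℕ) : ℤ)] :=
        ((hxc.of_dvd hpde).symm).trans (hxm.of_dvd hpdm)
      have hcBad : c ∈ Bad m := by
        rw [hBad, Finset.mem_filter]
        exact ⟨hcrange, hca⟩
      exact hcB (Finset.mem_biUnion.2 ⟨m, hmD1, hcBad⟩)
    · have hcopm : Nat.Coprime m (q ^ γ) :=
        Nat.Coprime.pow_right γ ((Nat.Prime.coprime_iff_not_dvd hq).2 hqm).symm
      have hms : m ∣ s := hcopm.dvd_of_dvd_mul_right (hmdvd m hm)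
      refine ⟨m, Finset.mem_filter.2 ⟨hm, hms⟩, ?_⟩
      have hyx : y ≡ x [ZMOD (m : ℤ)] :=
        (hxy.symm).of_dvd (Int.natCast_dvd_natCast.2 hms)
      exact hyx.trans hxm

lemma tau_prime_pow {pp : ℕ} (hpp : pp.Prime) (e : ℕ) :
    (pp ^ e).divisors.card = e + 1 := by
  rw [Nat.divisors_prime_pow hpp]
  simp

lemma tau_mul_coprime {A B : ℕ} (h : A.Coprime B) :
    (A * B).divisors.card = A.divisors.card * B.divisors.card :=
  Nat.Coprime.card_divisors_mul h

/-- Strengthened Sun criterion: if `n = p₁^α₁ ⋯ p_k^α_k ⬝ q` with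
`2 = p₁ < ⋯ < p_k < q` all prime, `α_i ≥ 1`, satisfying
(1) `p_{i+1} = τ(p₁^α₁ ⋯ p_i^α_i) + 1` for `1 ≤ i < k`;
(2) `q ≤ τ(p₁^α₁ ⋯ p_k^α_k)`;
(3) `q > τ(n/(p_i q))` for each `1 ≤ i ≤ k`;
then `n` is a primitive covering number. -/
theorem stmt17 (k : ℕ) (hk : 0 < k) (p α : Fin k → ℕ) (q : ℕ)
    (hp : ∀ i, (p i).Prime) (hq : q.Prime) (hmono : StrictMono p)
    (h2 : p ⟨0, hk⟩ = 2) (hlt : ∀ i, p i < q) (hα : ∀ i, 1 ≤ α i)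
    (h1 : ∀ i : Fin k, ∀ h : i.val + 1 < k,
      p ⟨i.val + 1, h⟩ = (∏ j ∈ Finset.Iic i, p j ^ α j).divisors.card + 1)
    (h2' : q ≤ (∏ i, p i ^ α i).divisors.card)
    (h3 : ∀ i : Fin k,
      (((∏ j, p j ^ α j) * q) / (p i * q)).divisors.card < q) :
    IsPrimitiveCoveringNumber ((∏ i, p i ^ α i) * q) := by
  classical
  set p' : ℕ → ℕ := fun j => if h : j < k then p ⟨j, h⟩ else 2 with hp'
  set α' : ℕ → ℕ := fun j => if h : j < k then α ⟨j, h⟩ else 1 with hα'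
  set L : ℕ → ℕ := fun i => ∏ j ∈ Finset.range i, p' j ^ α' j with hL
  have hp'prime : ∀ j, (p' j).Prime := by
    intro j; rw [hp']; dsimp only
    split
    · exact hp _
    · exact Nat.prime_two
  have hp'val : ∀ j (h : j < k), p' j = p ⟨j, h⟩ := by
    intro j h; rw [hp']; simp [h]
  have hα'val : ∀ j (h : j < k), α' j = α ⟨j, h⟩ := by
    intro j h; rw [hα']; simp [h]
  have hLpos : ∀ i, 0 < L i := by
    intro i; rw [hL]; dsimp only
    exact Finset.prod_pos fun j _ => pow_pos (hp'prime j).pos _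
  have hLsucc : ∀ i, L (i + 1) = L i * p' i ^ α' i := by
    intro i; rw [hL]; dsimp only; exact Finset.prod_range_succ _ _
  have hL0 : L 0 = 1 := by simp [hL]
  -- products over Fin
  have hLk : (∏ i, p i ^ α i) = L k := by
    rw [hL]
    dsimp only
    rw [← Fin.prod_univ_eq_prod_range (fun j => p' j ^ α' j) k]
    apply Finset.prod_congr rfl
    intro i _
    rw [hp'val i.val i.isLt, hα'val i.val i.isLt]
  have hIic : ∀ i : Fin k, (∏ j ∈ Finset.Iic i, p j ^ α j) = L (i.val + 1) := by
    intro i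
    have hr : Finset.range (i.val + 1) = Finset.Iic (i.val) := by
      ext m; simp [Nat.lt_succ_iff]
    rw [hL]
    dsimp only
    rw [hr, ← Fin.map_valEmbedding_Iic, Finset.prod_map]
    apply Finset.prod_congr rfl
    intro j _
    simp only [Fin.valEmbedding_apply]
    rw [hp'val j.val j.isLt, hα'val j.val j.isLt]
  -- p' i does not divide L i
  have hpL : ∀ i < k, ¬ p' i ∣ L i := by
    intro i hik hdvd
    rw [hL] at hdvd
    dsimp only at hdvd
    obtain ⟨j, hj, hdj⟩ := (Prime.dvd_finset_prod_iff (hp'prime i).prime _).1 hdvd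
    rw [Finset.mem_range] at hj
    have : p' i = p' j :=
      (Nat.prime_dvd_prime_iff_eq (hp'prime i) (hp'prime j)).1
        ((hp'prime i).dvd_of_dvd_pow hdj)
    have hjk : j < k := lt_trans hj hik
    have hlt2 : p' j < p' i := by
      rw [hp'val j hjk, hp'val i hik]
      exact hmono (show (⟨j, hjk⟩ : Fin k) < ⟨i, hik⟩ from hj)
    omega
  -- tau of L i
  have hTau : ∀ i < k, (L i).divisors.card + 1 = p' i := by
    intro i hik
    cases i with
    | zero =>
      rw [hL]
      dsimp only
      rw [hp'val 0 hik]
      have : p ⟨0, hik⟩ = p ⟨0, hk⟩ := rfl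
      rw [this, h2]
      simp
    | succ i =>
      have hik' : i < k := lt_trans (Nat.lt_succ_self i) hik
      have h1' := h1 ⟨i, hik'⟩ hik
      rw [hIic ⟨i, hik'⟩] at h1'
      have h1'' : p ⟨i + 1, hik⟩ = (L (i + 1)).divisors.card + 1 := h1'
      rw [hp'val (i+1) hik]
      omega
  -- almost covering of the towers
  have hACstep : ∀ i < k, AlmostCov (L i) → ∀ e, AlmostCov (L i * p' i ^ e) := by
    intro i hik hACi e
    induction e with
    | zero => simpa using hACi
    | succ e ih =>
      have hco : (L i).Coprime (p' i ^ e) :=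
        Nat.Coprime.pow_right e
          (((Nat.Prime.coprime_iff_not_dvd (hp'prime i)).2 (hpL i hik)).symm)
      have hco1 : (L i).Coprime (p' i ^ (e + 1)) :=
        Nat.Coprime.pow_right _
          (((Nat.Prime.coprime_iff_not_dvd (hp'prime i)).2 (hpL i hik)).symm)
      have heq : L i * p' i ^ (e + 1) = (L i * p' i ^ e) * p' i := by
        rw [mul_assoc, pow_succ]
      rw [heq]
      apply almostCov_step (mul_pos (hLpos i) (pow_pos (hp'prime i).pos e))
        (hp'prime i).pos ih
      rw [← heq, tau_mul_coprime hco, tau_mul_coprime hco1,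
        tau_prime_pow (hp'prime i), tau_prime_pow (hp'prime i)]
      have hT := hTau i hik
      have hexp : (L i).divisors.card * (e + 1 + 1)
          = (L i).divisors.card * (e + 1) + (L i).divisors.card := by ring
      omega
  have hAC : ∀ i ≤ k, AlmostCov (L i) := by
    intro i
    induction i with
    | zero => intro _; rw [hL0]; exact almostCov_one
    | succ i ih =>
      intro hik
      have hik' : i < k := hik
      rw [hLsucc i]
      exact hACstep i hik' (ih (le_of_lt hik')) (α' i)
  -- q does not divide L k
  have hqL : ¬ q ∣ L k := by
    intro hdvd
    rw [hL] at hdvd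
    dsimp only at hdvd
    obtain ⟨j, hj, hdj⟩ := (Prime.dvd_finset_prod_iff hq.prime _).1 hdvd
    rw [Finset.mem_range] at hj
    have : q = p' j :=
      (Nat.prime_dvd_prime_iff_eq hq (hp'prime j)).1 (hq.dvd_of_dvd_pow hdj)
    have := hlt ⟨j, hj⟩
    rw [← hp'val j hj] at this
    omega
  have hcoqL : (L k).Coprime q := ((Nat.Prime.coprime_iff_not_dvd hq).2 hqL).symm
  -- main covering
  have hcovn : IsCoveringNumber (L k * q) := by
    apply cov_step (hLpos k) hq.pos (hAC k le_rfl)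
    rw [tau_mul_coprime hcoqL, Nat.Prime.divisors hq]
    have hcard2 : ({1, q} : Finset ℕ).card = 2 := by
      rw [Finset.card_insert_of_notMem (by simp [hq.one_lt.ne]), Finset.card_singleton]
    rw [hcard2]
    rw [hLk] at h2'
    omega
  -- not covering for divisors of L i
  have hNotCov : ∀ i ≤ k, ∀ d, d ∣ L i → ¬ IsCoveringNumber d := by
    intro i
    induction i with
    | zero =>
      intro _ d hd
      rw [hL0, Nat.dvd_one] at hd
      subst hd
      exact not_cov_one
    | succ i ih =>
      intro hik d hd
      have hik' : i < k := hik
      rw [hLsucc i] at hd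
      have hd0 : d ≠ 0 := by
        rintro rfl
        have h0 := Nat.eq_zero_of_zero_dvd hd
        have hpos : 0 < L i * p' i ^ α' i :=
          mul_pos (hLpos i) (pow_pos (hp'prime i).pos _)
        omega
      set P := p' i with hPdef
      set γ := d.factorization P with hγ
      set s := ordCompl[P] d with hs
      have hform : P ^ γ * s = d := Nat.ordProj_mul_ordCompl_eq_self d P
      have hs0 : s ≠ 0 := Nat.pos_of_ne_zero (by
        intro h0
        rw [h0, mul_zero] at hform
        exact hd0 hform.symm) |>.ne'
      have hPs : ¬ P ∣ s := Nat.not_dvd_ordCompl (hp'prime i) hd0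
      have hsL : s ∣ L i := by
        have h1' : s ∣ L i * P ^ α' i := dvd_trans (Nat.ordCompl_dvd d P) hd
        exact (Nat.Coprime.pow_right _
          (((Nat.Prime.coprime_iff_not_dvd (hp'prime i)).2 hPs).symm)).dvd_of_dvd_mul_right h1'
      have hτs : s.divisors.card ≤ P - 1 := by
        have hsub : s.divisors ⊆ (L i).divisors :=
          Nat.divisors_subset_of_dvd (hLpos i).ne' hsL
        have := Finset.card_le_card hsub
        have hT := hTau i hik'
        omega
      intro hcovd
      have hcovs : IsCoveringNumber s := by
        apply descent (hp'prime i) hPs (Nat.pos_of_ne_zero hs0) hτs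
        rw [mul_comm]
        rw [hform]
        exact hcovd
      exact ih (le_of_lt hik') s hsL hcovs
  rw [hLk]
  constructor
  · exact hcovn
  · intro d hdvd hlt'
    by_cases hqd : q ∣ d
    · have hn0 : 0 < L k * q := mul_pos (hLpos k) hq.pos
      have hd0 : d ≠ 0 := by
        rintro rfl
        have := Nat.eq_zero_of_zero_dvd hdvd
        omega
      set γq := d.factorization q with hγq
      set s := ordCompl[q] d with hsdef
      have hform : q ^ γq * s = d := Nat.ordProj_mul_ordCompl_eq_self d q
      have hs0 : s ≠ 0 := by
        intro h0
        rw [h0, mul_zero] at hform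
        exact hd0 hform.symm
      have hqs : ¬ q ∣ s := Nat.not_dvd_ordCompl hq hd0
      have hsLk : s ∣ L k := by
        have h1' : s ∣ L k * q := dvd_trans (Nat.ordCompl_dvd d q) hdvd
        exact (((Nat.Prime.coprime_iff_not_dvd hq).2 hqs).symm).dvd_of_dvd_mul_right h1'
      have hsne : s ≠ L k := by
        intro heq
        have hγ1 : 1 ≤ γq := hq.factorization_pos_of_dvd hd0 hqd
        have hγle : γq ≤ 1 := by
          have hle := (Nat.factorization_le_iff_dvd hd0 hn0.ne').2 hdvd q
          rw [Nat.factorization_mul (hLpos k).ne' hq.pos.ne', Finsupp.add_apply,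
            Nat.factorization_eq_zero_of_not_dvd hqL, hq.factorization,
            Finsupp.single_eq_same, zero_add] at hle
          exact hle
        rw [heq, show γq = 1 from le_antisymm hγle hγ1, pow_one, mul_comm] at hform
        omega
      have hnotle : ¬ ((L k).factorization ≤ s.factorization) := by
        intro hle
        have := (Nat.factorization_le_iff_dvd (hLpos k).ne' hs0).1 hle
        exact hsne (Nat.dvd_antisymm hsLk this)
      rw [Finsupp.le_def] at hnotle
      push_neg at hnotle
      obtain ⟨P, hPlt⟩ := hnotle
      have hPmem : P ∈ (L k).primeFactors := by
        rw [← Nat.support_factorization, Finsupp.mem_support_iff]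
        omega
      have hPprime : P.Prime := Nat.prime_of_mem_primeFactors hPmem
      have hPdvd : P ∣ L k := Nat.dvd_of_mem_primeFactors hPmem
      have hsP : s * P ∣ L k := by
        rw [← Nat.factorization_le_iff_dvd (Nat.mul_ne_zero hs0 hPprime.pos.ne') (hLpos k).ne',
          Nat.factorization_mul hs0 hPprime.pos.ne', Finsupp.le_def]
        intro r
        rw [Finsupp.add_apply, hPprime.factorization]
        by_cases hr : r = P
        · subst hr
          rw [Finsupp.single_eq_same]
          omega
        · rw [Finsupp.single_eq_of_ne' (Ne.symm hr)]
          have := (Nat.factorization_le_iff_dvd hs0 (hLpos k).ne').2 hsLk r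
          omega
      obtain ⟨j, hjk, hPj⟩ : ∃ j, ∃ _ : j < k, p' j = P := by
        have hdv : P ∣ L k := hPdvd
        rw [hL] at hdv
        dsimp only at hdv
        obtain ⟨j, hj, hdj⟩ := (Prime.dvd_finset_prod_iff hPprime.prime _).1 hdv
        rw [Finset.mem_range] at hj
        exact ⟨j, hj, ((Nat.prime_dvd_prime_iff_eq hPprime (hp'prime j)).1
          (hPprime.dvd_of_dvd_pow hdj)).symm⟩
      have hτs : s.divisors.card ≤ q - 1 := by
        have h3j := h3 ⟨j, hjk⟩
        rw [hLk, ← hp'val j hjk, hPj] at h3j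
        rw [Nat.mul_div_mul_right (L k) P hq.pos] at h3j
        have hsLP : s ∣ L k / P :=
          (Nat.dvd_div_iff_mul_dvd hPdvd).2 (by rwa [mul_comm] at hsP)
        have hLP0 : L k / P ≠ 0 := by
          have := Nat.div_pos (Nat.le_of_dvd (hLpos k) hPdvd) hPprime.pos
          omega
        have hsub := Finset.card_le_card (Nat.divisors_subset_of_dvd hLP0 hsLP)
        omega
      intro hcovd
      have hcovs : IsCoveringNumber s := by
        apply descent hq hqs (Nat.pos_of_ne_zero hs0) hτs
        rw [mul_comm, hform]
        exact hcovd
      exact hNotCov k le_rfl s hsLk hcovs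
    · have hcop : Nat.Coprime d q := (Nat.Prime.coprime_iff_not_dvd hq).2 hqd |>.symm
      exact hNotCov k le_rfl d (hcop.dvd_of_dvd_mul_right hdvd)
end
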